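/- arXiv:1410.8328 — 2 statements merged into one kernel-verified Lean document; each statement's English description precedes it below -/
import Mathlib

section
/- Define a sequence of indices recursively by a_1 = 1 and a_{k+1} = a_k + d⁺(v_{a_k}) + 1, where d⁺(v_{a_k}) is the out-degree of v_{a_k} in the infinite Jaco graph J_∞(1). Then for every n ≥ 1, the set I_n = {v_{a_k} : a_k ≤ n} is a maximum independent set of the underlying graph of the finite Jaco graph J_n(1); in particular the independence number satisfies α(J_n(1)) = |{k : a_k ≤ n}|. -/
open SimpleGraph

/-- In-degree of vertex `j` in the infinite Jaco graph `J_∞(1)`: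
the number of `i < j` with an arc `(v_i, v_j)`, i.e. `i < j` and `j ≤ 2i - d⁻(v_i)`. -/
noncomputable def jacoInDeg (j : ℕ) : ℕ :=
  Nat.strongRecOn j fun j ih =>
    ((Finset.range j).attach.filter
      (fun i => j ≤ 2 * i.1 - ih i.1 (Finset.mem_range.mp i.2))).card

/-- Out-degree of vertex `i` in `J_∞(1)`: the number of `j` with `i < j ≤ 2i - d⁻(v_i)`. -/
noncomputable def jacoOutDeg (i : ℕ) : ℕ := (Finset.Ioc i (2 * i - jacoInDeg i)).card

/-- The underlying (undirected, simple) graph of the infinite Jaco graph `J_∞(1)` on `ℕ`,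
with vertex `i` playing the role of `v_i`. -/
def JacoInf : SimpleGraph ℕ where
  Adj i j := (i < j ∧ j ≤ 2 * i - jacoInDeg i) ∨ (j < i ∧ i ≤ 2 * j - jacoInDeg j)
  symm := ⟨fun i j h => Or.symm h⟩
  loopless := ⟨fun i h => by rcases h with ⟨h, -⟩ | ⟨h, -⟩ <;> omega⟩

/-- The underlying graph of the finite Jaco graph `J_n(1)`: the subgraph of `J_∞(1)`
induced by `{v_1, …, v_n}`, with `(k : Fin n)` representing `v_{k+1}`. -/
def Jaco (n : ℕ) : SimpleGraph (Fin n) := JacoInf.comap (fun k => (k : ℕ) + 1)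

/-- `s` is an independent set of `G`. -/
def IsIndepSet {V : Type*} (G : SimpleGraph V) (s : Set V) : Prop :=
  s.Pairwise fun a b => ¬ G.Adj a b

/-- The independence number of `G`. -/
noncomputable def indepNum {V : Type*} [Fintype V] (G : SimpleGraph V) : ℕ :=
  sSup {k | ∃ s : Set V, _root_.IsIndepSet G s ∧ s.ncard = k}

/-- `s` is a vertex cover of `G`: it meets every edge. -/
def IsVertexCover {V : Type*} (G : SimpleGraph V) (s : Set V) : Prop :=
  ∀ ⦃a b : V⦄, G.Adj a b → a ∈ s ∨ b ∈ s

/-- The vertex covering number of `G`. -/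
noncomputable def coverNum {V : Type*} [Fintype V] (G : SimpleGraph V) : ℕ :=
  sInf {k | ∃ s : Set V, _root_.IsVertexCover G s ∧ s.ncard = k}

/-- `s` is a dominating set of `G`. -/
def IsDomSet {V : Type*} (G : SimpleGraph V) (s : Set V) : Prop :=
  ∀ v ∉ s, ∃ u ∈ s, G.Adj u v

/-- The domination number `γ(G)`. -/
noncomputable def domNum {V : Type*} [Fintype V] (G : SimpleGraph V) : ℕ :=
  sInf {k | ∃ s : Set V, IsDomSet G s ∧ s.ncard = k}

/-- The murtage number `m(G)`: the minimum number of edges whose addition to `G`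
strictly decreases the domination number (and `0` when `γ(G) = 1`). -/
noncomputable def murtage {V : Type*} [Fintype V] (G : SimpleGraph V) : ℕ :=
  if domNum G = 1 then 0
  else sInf {k | ∃ H : SimpleGraph V, G ≤ H ∧ domNum H < domNum G ∧
        (H.edgeSet \ G.edgeSet).ncard = k}

/-- `γ⁻(G)`: the minimum number of vertices whose removal strictly decreases
the domination number. -/
noncomputable def gammaMinus {V : Type*} [Fintype V] (G : SimpleGraph V) : ℕ :=
  sInf {k | ∃ s : Set V, s.ncard = k ∧
        @domNum _ (Set.toFinite sᶜ).fintype (G.induce sᶜ) < domNum G}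

/-- The bondage number `b(G)`: the minimum number of edges whose removal strictly
increases the domination number. -/
noncomputable def bondage {V : Type*} [Fintype V] (G : SimpleGraph V) : ℕ :=
  sInf {k | ∃ H : SimpleGraph V, H ≤ G ∧ domNum G < domNum H ∧
        (G.edgeSet \ H.edgeSet).ncard = k}

/-- The maximum degree `Δ(G)`. -/
noncomputable def maxDeg {V : Type*} [Fintype V] (G : SimpleGraph V) : ℕ :=
  Finset.univ.sup fun v => (G.neighborSet v).ncard

/-- The recursively defined index sequence: `a 0 = 1` (i.e. `a_1 = 1`) and
`a (k+1) = a k + d⁺(v_{a k}) + 1`. -/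
noncomputable def aSeq : ℕ → ℕ
  | 0 => 1
  | k + 1 => aSeq k + jacoOutDeg (aSeq k) + 1

/-!
Write `reach i = 2i - d⁻(v_i)` for the last out-neighbour of `v_i`, so that for `i < j` the
vertices `v_i, v_j` are adjacent iff `j ≤ reach i`. Since `d⁻` grows by at most one per step,
`reach` is monotone, and `a_{k+1} = reach a_k + 1` is the greedy choice: the next vertex that is
not adjacent to `v_{a_k}`. Listing any independent set increasingly as `s_0 < s_1 < ⋯`, induction
gives `a_i ≤ s_i`, because `s_{i+1} > reach s_i ≥ reach a_i`. Hence no independent set of `J_n(1)`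
is larger than the greedy one.
-/

open Finset

section Greedy

variable {f a : ℕ → ℕ}

theorem le_orderEmbOfFin_of_greedy (hf : Monotone f) (ha : ∀ k, a (k + 1) = f (a k) + 1)
    (s : Finset ℕ) (h0 : ∀ x ∈ s, a 0 ≤ x) (hsep : ∀ x ∈ s, ∀ y ∈ s, x < y → f x < y) :
    ∀ i (hi : i < s.card), a i ≤ s.orderEmbOfFin rfl ⟨i, hi⟩
  | 0, hi => h0 _ (s.orderEmbOfFin_mem rfl _)
  | i + 1, hi => by
    have hprev := le_orderEmbOfFin_of_greedy hf ha s h0 hsep i (by omega)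
    have hsep_i := hsep _ (s.orderEmbOfFin_mem rfl ⟨i, by omega⟩) _
      (s.orderEmbOfFin_mem rfl ⟨i + 1, hi⟩)
      ((s.orderEmbOfFin rfl).strictMono (Fin.mk_lt_mk.mpr i.lt_succ_self))
    rw [ha]
    exact Nat.succ_le_of_lt ((hf hprev).trans_lt hsep_i)

theorem card_le_ncard_of_greedy (hf : Monotone f) (ha : ∀ k, a (k + 1) = f (a k) + 1)
    (ha_mono : StrictMono a) {s : Finset ℕ} {n : ℕ} (h0 : ∀ x ∈ s, a 0 ≤ x)
    (hn : ∀ x ∈ s, x ≤ n) (hsep : ∀ x ∈ s, ∀ y ∈ s, x < y → f x < y) :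
    s.card ≤ {k | a k ≤ n}.ncard := by
  have hsub : Set.Iio s.card ⊆ {k | a k ≤ n} := fun i hi =>
    (le_orderEmbOfFin_of_greedy hf ha s h0 hsep i hi).trans (hn _ (s.orderEmbOfFin_mem rfl _))
  have hfin : {k | a k ≤ n}.Finite :=
    (Set.finite_Iic n).subset fun k hk => ha_mono.le_apply.trans hk
  simpa using Set.ncard_le_ncard hsub hfin

end Greedy

theorem indepNum_eq_ncard {V : Type*} [Fintype V] {G : SimpleGraph V} {t : Set V}
    (ht : _root_.IsIndepSet G t) (hmax : ∀ s, _root_.IsIndepSet G s → s.ncard ≤ t.ncard) :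
    _root_.indepNum G = t.ncard := by
  have hbound : t.ncard ∈ upperBounds {k | ∃ s, _root_.IsIndepSet G s ∧ s.ncard = k} := by
    rintro k ⟨s, hs, rfl⟩
    exact hmax s hs
  exact le_antisymm (csSup_le ⟨_, t, ht, rfl⟩ hbound) (le_csSup ⟨_, hbound⟩ ⟨t, ht, rfl⟩)

noncomputable def jacoReach (i : ℕ) : ℕ := 2 * i - jacoInDeg i

theorem jacoInDeg_eq (j : ℕ) :
    jacoInDeg j = #{i ∈ range j | j ≤ 2 * i - jacoInDeg i} := by
  have hunfold : jacoInDeg j = #{i ∈ (range j).attach | j ≤ 2 * i.1 - jacoInDeg i.1} :=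
    Nat.strongRecOn_eq _ j
  rw [hunfold, filter_attach (fun i => j ≤ 2 * i - jacoInDeg i)]
  simp

theorem jacoInDeg_le (j : ℕ) : jacoInDeg j ≤ j := by
  rw [jacoInDeg_eq]
  exact (card_filter_le _ _).trans (card_range j).le

theorem jacoInDeg_succ_le (j : ℕ) : jacoInDeg (j + 1) ≤ jacoInDeg j + 1 := by
  rw [jacoInDeg_eq (j + 1), jacoInDeg_eq j]
  calc #{i ∈ range (j + 1) | j + 1 ≤ 2 * i - jacoInDeg i}
      ≤ #{i ∈ range j | j + 1 ≤ 2 * i - jacoInDeg i} + 1 := by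
        rw [range_add_one, filter_insert]
        split
        · exact card_insert_le _ _
        · omega
    _ ≤ #{i ∈ range j | j ≤ 2 * i - jacoInDeg i} + 1 := by
        gcongr with i
        omega

theorem le_jacoReach (i : ℕ) : i ≤ jacoReach i := by
  have := jacoInDeg_le i
  unfold jacoReach
  omega

theorem jacoReach_monotone : Monotone jacoReach := by
  refine monotone_nat_of_le_succ fun j => ?_
  have := jacoInDeg_succ_le j
  have := jacoInDeg_le j
  unfold jacoReach
  omega

theorem jacoInf_adj_iff_of_lt {i j : ℕ} (h : i < j) : JacoInf.Adj i j ↔ j ≤ jacoReach i := by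
  change (i < j ∧ j ≤ jacoReach i) ∨ (j < i ∧ _) ↔ _
  omega

theorem aSeq_succ (k : ℕ) : aSeq (k + 1) = jacoReach (aSeq k) + 1 := by
  rw [aSeq, jacoOutDeg, Nat.card_Ioc]
  have := le_jacoReach (aSeq k)
  unfold jacoReach at *
  omega

theorem aSeq_strictMono : StrictMono aSeq :=
  strictMono_nat_of_lt_succ fun k => by rw [aSeq]; omega

theorem one_le_aSeq (k : ℕ) : 1 ≤ aSeq k :=
  aSeq_strictMono.monotone k.zero_le

theorem not_jacoInf_adj_aSeq {k l : ℕ} (h : k < l) : ¬ JacoInf.Adj (aSeq k) (aSeq l) := by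
  have hnext : aSeq (k + 1) ≤ aSeq l := aSeq_strictMono.monotone h
  rw [jacoInf_adj_iff_of_lt (aSeq_strictMono h), not_le, Nat.lt_iff_add_one_le, ← aSeq_succ]
  exact hnext

theorem isIndepSet_aSeq (n : ℕ) :
    _root_.IsIndepSet (Jaco n) {v : Fin n | ∃ k, aSeq k = (v : ℕ) + 1} := by
  rintro u ⟨k, hk⟩ v ⟨l, hl⟩ huv hadj
  change JacoInf.Adj ((u : ℕ) + 1) ((v : ℕ) + 1) at hadj
  rw [← hk, ← hl] at hadj
  rcases lt_trichotomy k l with hkl | rfl | hlk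
  · exact not_jacoInf_adj_aSeq hkl hadj
  · exact huv (Fin.ext (by omega))
  · exact not_jacoInf_adj_aSeq hlk hadj.symm

theorem ncard_aSeq_le_eq (n : ℕ) :
    {v : Fin n | ∃ k, aSeq k = (v : ℕ) + 1}.ncard = {k | aSeq k ≤ n}.ncard := by
  have hpos := one_le_aSeq
  symm
  refine Set.ncard_congr
    (fun k (hk : aSeq k ≤ n) => (⟨aSeq k - 1, by have := hpos k; omega⟩ : Fin n))
    (fun k _ => ⟨k, by have := hpos k; dsimp only; omega⟩) (fun k l _ _ hkl => ?_) ?_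
  · have := hpos k
    have := hpos l
    exact aSeq_strictMono.injective (by simp only [Fin.ext_iff] at hkl; omega)
  · rintro v ⟨k, hk⟩
    exact ⟨k, by change aSeq k ≤ n; omega, Fin.ext (by dsimp only; omega)⟩

theorem ncard_le_of_isIndepSet {n : ℕ} {s : Set (Fin n)} (hs : _root_.IsIndepSet (Jaco n) s) :
    s.ncard ≤ {k | aSeq k ≤ n}.ncard := by
  classical
  let t : Finset ℕ := s.toFinset.image fun v : Fin n => (v : ℕ) + 1
  have hcard : s.ncard = t.card := by
    rw [Set.ncard_eq_toFinset_card', card_image_of_injective _ fun u v h => by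
      simpa [Fin.ext_iff] using h]
  rw [hcard]
  refine card_le_ncard_of_greedy jacoReach_monotone aSeq_succ aSeq_strictMono ?_ ?_ ?_
  · simp [t, aSeq]
  · simp only [t, mem_image, Set.mem_toFinset]
    rintro _ ⟨v, -, rfl⟩
    exact v.isLt
  · simp only [t, mem_image, Set.mem_toFinset]
    rintro _ ⟨u, hu, rfl⟩ _ ⟨v, hv, rfl⟩ huv
    have hnadj := hs hu hv (by rintro rfl; omega)
    change ¬ JacoInf.Adj ((u : ℕ) + 1) ((v : ℕ) + 1) at hnadj
    rwa [jacoInf_adj_iff_of_lt huv, not_le] at hnadj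

theorem jaco_max_indep_set_general (n : ℕ) :
    _root_.IsIndepSet (Jaco n) {v : Fin n | ∃ k : ℕ, aSeq k = (v : ℕ) + 1} ∧
    ({v : Fin n | ∃ k : ℕ, aSeq k = (v : ℕ) + 1}).ncard = _root_.indepNum (Jaco n) ∧
    _root_.indepNum (Jaco n) = {k : ℕ | aSeq k ≤ n}.ncard := by
  have hcard := ncard_aSeq_le_eq n
  have hnum := indepNum_eq_ncard (isIndepSet_aSeq n) fun s hs =>
    hcard ▸ ncard_le_of_isIndepSet hs
  exact ⟨isIndepSet_aSeq n, hnum.symm, hnum.trans hcard⟩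

/-- For every `n ≥ 1`, the set `I_n = {v_{a_k} : a_k ≤ n}` is a maximum
independent set of the underlying graph of `J_n(1)`; in particular
`α(J_n(1)) = |{k : a_k ≤ n}|`. (Vertex `v : Fin n` represents `v_{v+1}`.) -/
theorem jaco_max_indep_set (n : ℕ) (hn : 1 ≤ n) :
    _root_.IsIndepSet (Jaco n) {v : Fin n | ∃ k : ℕ, aSeq k = (v : ℕ) + 1} ∧
    ({v : Fin n | ∃ k : ℕ, aSeq k = (v : ℕ) + 1}).ncard = _root_.indepNum (Jaco n) ∧
    _root_.indepNum (Jaco n) = {k : ℕ | aSeq k ≤ n}.ncard :=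
  jaco_max_indep_set_general n
end

section
/- Let G be a finite simple connected graph with murtage number m(G) ≥ 1. Then m(G) = γ⁻(G), i.e., the minimum number of edges whose addition to G strictly decreases the domination number equals the minimum number of vertices whose removal from G strictly decreases the domination number. -/
open SimpleGraph

/-! Deleting vertices and adding edges trade against each other one for one. If deleting `S`
leaves a graph dominated by some `D` with `|D| < γ(G)`, then joining one vertex of `D` to every
vertex of `S` makes `D` dominate `G` with at most `|S|` new edges. Conversely, if new edges make
some `D` with `|D| < γ(G)` dominating, then every vertex that `D` fails to dominate in `G` is the
endpoint of its own new edge, and deleting these vertices leaves a graph dominated by `D`. -/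

section Domination

variable {V : Type*} (G : SimpleGraph V)

theorem isDomSet_univ : IsDomSet G Set.univ := fun v hv => absurd (Set.mem_univ v) hv

theorem IsDomSet.nonempty [Nonempty V] {s : Set V} (hs : IsDomSet G s) : s.Nonempty := by
  obtain ⟨v⟩ := ‹Nonempty V›
  by_cases hv : v ∈ s
  · exact ⟨v, hv⟩
  · obtain ⟨u, hu, -⟩ := hs v hv
    exact ⟨u, hu⟩

variable [Fintype V]

theorem domNum_le_ncard {G} {s : Set V} (hs : IsDomSet G s) : domNum G ≤ s.ncard :=
  Nat.sInf_le ⟨s, hs, rfl⟩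

theorem exists_isDomSet_ncard_eq_domNum : ∃ s : Set V, IsDomSet G s ∧ s.ncard = domNum G :=
  Nat.sInf_mem (s := {k | ∃ s : Set V, IsDomSet G s ∧ s.ncard = k})
    ⟨_, _, isDomSet_univ G, rfl⟩

theorem domNum_le_card : domNum G ≤ Nat.card V :=
  (domNum_le_ncard (isDomSet_univ G)).trans_eq (Set.ncard_univ V)

theorem domNum_le_one_of_subsingleton [Subsingleton V] : domNum G ≤ 1 :=
  (domNum_le_card G).trans (Finite.card_le_one_iff_subsingleton.2 ‹_›)

theorem nonempty_of_domNum_ne_zero (h : domNum G ≠ 0) : Nonempty V := by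
  by_contra hV
  rw [not_nonempty_iff] at hV
  exact h (Nat.le_zero.1 ((domNum_le_card G).trans_eq Nat.card_of_isEmpty))

end Domination

theorem ncard_edgeSet_sup_fromEdgeSet_diff_le {V : Type*} (G : SimpleGraph V) {E : Set (Sym2 V)}
    (hE : E.Finite) : ((G ⊔ fromEdgeSet E).edgeSet \ G.edgeSet).ncard ≤ E.ncard := by
  refine Set.ncard_le_ncard ?_ hE
  rw [edgeSet_sup, edgeSet_fromEdgeSet, Set.union_sdiff_left]
  exact Set.sdiff_subset.trans Set.sdiff_subset

theorem isDomSet_sup_fromEdgeSet_star {V : Type*} {G : SimpleGraph V} {S : Set V} {D : Set ↥Sᶜ}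
    (hD : IsDomSet (G.induce Sᶜ) D) {u : ↥Sᶜ} (hu : u ∈ D) :
    IsDomSet (G ⊔ fromEdgeSet ((s(↑u, ·)) '' S)) (Subtype.val '' D) := by
  intro v hv
  by_cases hvS : v ∈ S
  · refine ⟨u, ⟨u, hu, rfl⟩, Or.inr ?_⟩
    rw [fromEdgeSet_adj]
    exact ⟨⟨v, hvS, rfl⟩, fun h => u.2 (h ▸ hvS)⟩
  · obtain ⟨d, hd, hadj⟩ := hD ⟨v, hvS⟩ fun h => hv ⟨_, h, rfl⟩
    exact ⟨d, ⟨d, hd, rfl⟩, Or.inl hadj⟩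

section Undominated

variable {V : Type*} (G : SimpleGraph V)

def undominated (D : Set V) : Set V := {v | v ∉ D ∧ ∀ u ∈ D, ¬ G.Adj u v}

theorem subset_compl_undominated (D : Set V) : D ⊆ (undominated G D)ᶜ := fun _ hd h => h.1 hd

theorem isDomSet_induce_compl_undominated (D : Set V) :
    IsDomSet (G.induce (undominated G D)ᶜ) (Subtype.val ⁻¹' D) := by
  intro v hv
  by_contra! h
  exact v.2 ⟨hv, fun u hu hadj => h ⟨u, subset_compl_undominated G D hu⟩ hu hadj⟩

theorem domNum_induce_compl_undominated_le [Fintype V] (D : Set V) :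
    @domNum _ (Set.toFinite (undominated G D)ᶜ).fintype (G.induce (undominated G D)ᶜ) ≤
      D.ncard := by
  let := (Set.toFinite (undominated G D)ᶜ).fintype
  exact (domNum_le_ncard (isDomSet_induce_compl_undominated G D)).trans_eq <|
    Set.ncard_preimage_of_injective_subset_range Subtype.val_injective
      (by simpa only [Subtype.range_coe] using subset_compl_undominated G D)

theorem ncard_undominated_le [Finite V] {H : SimpleGraph V} {D : Set V} (hD : IsDomSet H D) :
    (undominated G D).ncard ≤ (H.edgeSet \ G.edgeSet).ncard := by
  choose w hwD hwAdj using fun v : undominated G D => hD v v.2.1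
  rw [← Nat.card_coe_set_eq, ← Nat.card_coe_set_eq]
  refine Nat.card_le_card_of_injective
    (fun v => ⟨s(w v, v), hwAdj v, fun h => v.2.2 _ (hwD v) h⟩) fun a b hab => ?_
  rcases Sym2.eq_iff.1 (congrArg Subtype.val hab) with ⟨-, h⟩ | ⟨-, h⟩
  · exact Subtype.ext h
  · exact absurd (h ▸ hwD b) a.2.1

end Undominated

section Murtage

variable {V : Type*} [Fintype V] (G : SimpleGraph V)

theorem exists_ncard_edgeSet_diff_eq_murtage (hm : murtage G ≠ 0) :
    domNum G ≠ 1 ∧ ∃ H : SimpleGraph V, G ≤ H ∧ domNum H < domNum G ∧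
      (H.edgeSet \ G.edgeSet).ncard = murtage G := by
  unfold murtage at hm ⊢
  split_ifs at hm ⊢ with h
  · exact absurd rfl hm
  · exact ⟨h, Nat.sInf_mem (Nat.nonempty_of_pos_sInf (Nat.pos_of_ne_zero hm))⟩

theorem murtage_le_ncard_edgeSet_diff (hγ : domNum G ≠ 1) {H : SimpleGraph V} (hGH : G ≤ H)
    (hH : domNum H < domNum G) : murtage G ≤ (H.edgeSet \ G.edgeSet).ncard := by
  rw [murtage, if_neg hγ]
  exact Nat.sInf_le ⟨H, hGH, hH, rfl⟩

theorem murtage_le_ncard_of_domNum_induce_lt (hγ : domNum G ≠ 1) {S : Set V} (hS : Sᶜ.Nonempty)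
    (h : @domNum _ (Set.toFinite Sᶜ).fintype (G.induce Sᶜ) < domNum G) :
    murtage G ≤ S.ncard := by
  let := (Set.toFinite Sᶜ).fintype
  obtain ⟨D, hD, hDcard⟩ := exists_isDomSet_ncard_eq_domNum (G.induce Sᶜ)
  have := hS.to_subtype
  obtain ⟨u, hu⟩ := hD.nonempty
  have hH : domNum (G ⊔ fromEdgeSet ((s(↑u, ·)) '' S)) < domNum G :=
    calc _ ≤ (Subtype.val '' D).ncard := domNum_le_ncard (isDomSet_sup_fromEdgeSet_star hD hu)
      _ = D.ncard := Set.ncard_image_of_injective _ Subtype.val_injective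
      _ < domNum G := hDcard ▸ h
  exact (murtage_le_ncard_edgeSet_diff G hγ le_sup_left hH).trans <|
    (ncard_edgeSet_sup_fromEdgeSet_diff_le G (S.toFinite.image _)).trans
      (Set.ncard_image_le S.toFinite)

end Murtage

section GammaMinus

variable {V : Type*} [Fintype V] (G : SimpleGraph V)

theorem gammaMinus_le_ncard {S : Set V}
    (h : @domNum _ (Set.toFinite Sᶜ).fintype (G.induce Sᶜ) < domNum G) :
    gammaMinus G ≤ S.ncard :=
  Nat.sInf_le ⟨S, rfl, h⟩

theorem gammaMinus_le_ncard_edgeSet_diff {H : SimpleGraph V} (hH : domNum H < domNum G) :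
    gammaMinus G ≤ (H.edgeSet \ G.edgeSet).ncard := by
  obtain ⟨D, hD, hDcard⟩ := exists_isDomSet_ncard_eq_domNum H
  have hSD := (domNum_induce_compl_undominated_le G D).trans_lt (hDcard ▸ hH)
  exact (gammaMinus_le_ncard G hSD).trans (ncard_undominated_le G hD)

theorem domNum_induce_lt_of_subsingleton (hγ : 2 ≤ domNum G) {S : Set V}
    (hS : Sᶜ.Subsingleton) :
    @domNum _ (Set.toFinite Sᶜ).fintype (G.induce Sᶜ) < domNum G := by
  have := hS.coe_sort
  let := (Set.toFinite Sᶜ).fintype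
  exact (domNum_le_one_of_subsingleton _).trans_lt hγ

theorem exists_ncard_eq_gammaMinus (hγ : 2 ≤ domNum G) :
    ∃ S : Set V, S.ncard = gammaMinus G ∧
      @domNum _ (Set.toFinite Sᶜ).fintype (G.induce Sᶜ) < domNum G :=
  Nat.sInf_mem (s := {k | ∃ S : Set V, S.ncard = k ∧
      @domNum _ (Set.toFinite Sᶜ).fintype (G.induce Sᶜ) < domNum G})
    ⟨_, Set.univ, rfl, domNum_induce_lt_of_subsingleton G hγ (by simp)⟩

theorem gammaMinus_lt_card (hγ : 2 ≤ domNum G) : gammaMinus G < Nat.card V := by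
  obtain ⟨v⟩ := nonempty_of_domNum_ne_zero G (by omega)
  have hv := domNum_induce_lt_of_subsingleton G hγ (S := {v}ᶜ) (by simp)
  exact (gammaMinus_le_ncard G hv).trans_lt (Set.ncard_lt_card (by simp))

end GammaMinus

theorem murtage_eq_gammaMinus_general {V : Type*} [Fintype V] (G : SimpleGraph V)
    (hm : 1 ≤ murtage G) :
    murtage G = gammaMinus G := by
  obtain ⟨hγ1, H, -, hH, hHcard⟩ := exists_ncard_edgeSet_diff_eq_murtage G (by omega)
  have hγ2 : 2 ≤ domNum G := by omega
  obtain ⟨S, hScard, hS⟩ := exists_ncard_eq_gammaMinus G hγ2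
  have hSc : Sᶜ.Nonempty := Set.nonempty_compl.2 fun hSu => by
    simpa [hSu, ← hScard] using gammaMinus_lt_card G hγ2
  refine le_antisymm ?_ ?_
  · exact hScard ▸ murtage_le_ncard_of_domNum_induce_lt G hγ1 hSc hS
  · exact hHcard ▸ gammaMinus_le_ncard_edgeSet_diff G hH

/-- For a finite simple connected graph `G` with `m(G) ≥ 1`,
the murtage number equals `γ⁻(G)`. -/
theorem murtage_eq_gammaMinus {V : Type*} [Fintype V] (G : SimpleGraph V)
    (hconn : G.Connected) (hm : 1 ≤ murtage G) :
    murtage G = gammaMinus G :=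
  murtage_eq_gammaMinus_general G hm
end
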